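/- Let φ be a flat ADT formula in negation normal form with size constraints over a well-defined ADT, and let φ₀, φ₁, … be an unfolding sequence for φ. For every i ∈ ℕ: if the reduct φ̃ᵢ is unsatisfiable over EUF+LIA, then φ is unsatisfiable over the ADT with size. -/

import Mathlib

/-!
Reduction of ADT constraints **with size constraints** to EUF+LIA:
soundness for unsatisfiability (Lemma 1 of the paper).
-/

structure ADTSig where
  numSorts : ℕ
  numCtors : ℕ
  ctorArgs : Fin numCtors → List (Fin numSorts)
  ctorRes : Fin numCtors → Fin numSorts

namespace ADTSig

inductive Term (S : ADTSig) : Fin S.numSorts → Type where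
  | mk (f : Fin S.numCtors)
      (args : (i : Fin (S.ctorArgs f).length) → Term S ((S.ctorArgs f).get i)) :
      Term S (S.ctorRes f)

/-- The size `|t|` of a constructor term: the number of constructor
occurrences. -/
def Term.size {S : ADTSig} : {σ : Fin S.numSorts} → Term S σ → ℕ
  | _, .mk _ args => 1 + ∑ i, (args i).size

def Term.head {S : ADTSig} : {σ : Fin S.numSorts} → Term S σ → Fin S.numCtors
  | _, .mk f _ => f

def WellDefined (S : ADTSig) : Prop := ∀ σ, Nonempty (S.Term σ)

structure SelInterp (S : ADTSig) where
  sel : (f : Fin S.numCtors) → (i : Fin (S.ctorArgs f).length) →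
    S.Term (S.ctorRes f) → S.Term ((S.ctorArgs f).get i)
  sel_mk : ∀ f i args, sel f i (Term.mk f args) = args i

/-! ### Presburger formulas (for the size constraints) -/

inductive PTerm (n : ℕ) where
  | cst (c : ℤ)
  | var (i : Fin n)
  | add (s t : PTerm n)
  | smul (c : ℤ) (t : PTerm n)

def PTerm.eval {n : ℕ} (ρ : Fin n → ℤ) : PTerm n → ℤ
  | .cst c => c
  | .var i => ρ i
  | .add s t => s.eval ρ + t.eval ρ
  | .smul c t => c * t.eval ρ

inductive PForm : ℕ → Type where
  | le {n} (s t : PTerm n) : PForm n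
  | peq {n} (s t : PTerm n) : PForm n
  | not {n} (φ : PForm n) : PForm n
  | and {n} (φ ψ : PForm n) : PForm n
  | or {n} (φ ψ : PForm n) : PForm n
  | ex {n} (φ : PForm (n + 1)) : PForm n

def PForm.eval : {n : ℕ} → (Fin n → ℤ) → PForm n → Prop
  | _, ρ, .le s t => s.eval ρ ≤ t.eval ρ
  | _, ρ, .peq s t => s.eval ρ = t.eval ρ
  | _, ρ, .not φ => ¬ φ.eval ρ
  | _, ρ, .and φ ψ => φ.eval ρ ∧ ψ.eval ρ
  | _, ρ, .or φ ψ => φ.eval ρ ∨ ψ.eval ρ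
  | _, ρ, .ex φ => ∃ z : ℤ, φ.eval (Fin.cons z ρ)

/-! ### Flat formulas with size constraints -/

/-- Literals of flat ADT formulas with size constraints: as in the size-free
case, plus Presburger constraints `φ_Pres(|x₁|,…,|x_n|)` on the sizes of
(the terms assigned to) variables. -/
inductive Lit (S : ADTSig) (V : Fin S.numSorts → Type) where
  | ctorEq (f : Fin S.numCtors)
      (xs : (i : Fin (S.ctorArgs f).length) → V ((S.ctorArgs f).get i))
      (x0 : V (S.ctorRes f))
  | selEq (f : Fin S.numCtors) (j : Fin (S.ctorArgs f).length)
      (x : V (S.ctorRes f)) (y : V ((S.ctorArgs f).get j))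
  | tst (f : Fin S.numCtors) (x : V (S.ctorRes f))
  | ntst (f : Fin S.numCtors) (x : V (S.ctorRes f))
  | eqv {σ : Fin S.numSorts} (x y : V σ)
  | nev {σ : Fin S.numSorts} (x y : V σ)
  | sizeC {n : ℕ} (xs : Fin n → Σ σ, V σ) (P : PForm n)

inductive Formula (S : ADTSig) (V : Fin S.numSorts → Type) where
  | fls
  | lit (l : Lit S V)
  | and (φ ψ : Formula S V)
  | or (φ ψ : Formula S V)

variable {S : ADTSig} {V : Fin S.numSorts → Type}

def Lit.holds (I : SelInterp S) (β : (σ : Fin S.numSorts) → V σ → S.Term σ) :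
    Lit S V → Prop
  | .ctorEq f xs x0 => Term.mk f (fun i => β _ (xs i)) = β _ x0
  | .selEq f j x y => I.sel f j (β _ x) = β _ y
  | .tst f x => (β _ x).head = f
  | .ntst f x => (β _ x).head ≠ f
  | .eqv x y => β _ x = β _ y
  | .nev x y => β _ x ≠ β _ y
  | .sizeC xs P => P.eval (fun i => ((β (xs i).1 (xs i).2).size : ℤ))

def Formula.holds (I : SelInterp S) (β : (σ : Fin S.numSorts) → V σ → S.Term σ) :
    Formula S V → Prop
  | .fls => False
  | .lit l => l.holds I β
  | .and φ ψ => φ.holds I β ∧ ψ.holds I β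
  | .or φ ψ => φ.holds I β ∨ ψ.holds I β

def Formula.ADTSat (φ : Formula S V) : Prop :=
  ∃ (I : SelInterp S) (β : (σ : Fin S.numSorts) → V σ → S.Term σ), φ.holds I β

/-! ### The EUF+LIA side, with size functions -/

/-- An EUF+LIA model for the vocabulary of the reduction with size: `size_σ`
replaces `depth_σ`. -/
structure RModel (S : ADTSig) where
  ctorF : (f : Fin S.numCtors) → (Fin (S.ctorArgs f).length → ℤ) → ℤ
  selF : (f : Fin S.numCtors) → Fin (S.ctorArgs f).length → ℤ → ℤ
  ctorIdF : Fin S.numSorts → ℤ → ℤ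
  sizeF : Fin S.numSorts → ℤ → ℤ

def ctorIdx' (S : ADTSig) (f : Fin S.numCtors) : ℤ :=
  ((Finset.univ.filter
      (fun g : Fin S.numCtors => g ≤ f ∧ S.ctorRes g = S.ctorRes f)).card : ℤ)

def InSort (S : ADTSig) (σ : Fin S.numSorts) (x : ℤ) : Prop :=
  Finite (S.Term σ) → (0 ≤ x ∧ x < (Nat.card (S.Term σ) : ℤ))

/-- The size image `𝕊_σ` of a sort, as a set of integers. -/
def SizeImageZ (S : ADTSig) (σ : Fin S.numSorts) : Set ℤ :=
  {z | ∃ t : S.Term σ, (t.size : ℤ) = z}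

/-- `CtorSpec′_f(x₀,…,x_n)` of Table II. -/
def CtorSpec' (M : RModel S) (f : Fin S.numCtors) (x0 : ℤ)
    (xs : Fin (S.ctorArgs f).length → ℤ) : Prop :=
  M.ctorF f xs = x0 ∧
  M.ctorIdF (S.ctorRes f) x0 = ctorIdx' S f ∧
  (∀ j, M.selF f j x0 = xs j ∧
     M.sizeF ((S.ctorArgs f).get j) (xs j) ∈ SizeImageZ S ((S.ctorArgs f).get j)) ∧
  M.sizeF (S.ctorRes f) x0 = 1 + ∑ j, M.sizeF ((S.ctorArgs f).get j) (xs j)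

def ExCtorSpec' (M : RModel S) (f : Fin S.numCtors) (x : ℤ) : Prop :=
  ∃ xs : Fin (S.ctorArgs f).length → ℤ,
    (∀ j, InSort S ((S.ctorArgs f).get j) (xs j)) ∧ CtorSpec' M f x xs

/-- The reduct of a literal: rules (1)–(6) with `CtorSpec′`, and rule (7) for
size literals (`|x| ≈ y` becomes `size_σ(x̃) ≈ y ∧ y ∈ 𝕊_σ`). -/
def Lit.redHolds (M : RModel S) (β : (σ : Fin S.numSorts) → V σ → ℤ) :
    Lit S V → Prop
  | .ctorEq f xs x0 => CtorSpec' M f (β _ x0) (fun i => β _ (xs i))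
  | .selEq f j x y => M.selF f j (β _ x) = β _ y ∧
      ∃ g, S.ctorRes g = S.ctorRes f ∧ ExCtorSpec' M g (β _ x)
  | .tst f x => ExCtorSpec' M f (β _ x)
  | .ntst f x => ∃ g, S.ctorRes g = S.ctorRes f ∧ g ≠ f ∧ ExCtorSpec' M g (β _ x)
  | .eqv x y => β _ x = β _ y
  | .nev x y => β _ x ≠ β _ y
  | .sizeC xs P =>
      P.eval (fun i => M.sizeF (xs i).1 (β (xs i).1 (xs i).2)) ∧
      ∀ i, M.sizeF (xs i).1 (β (xs i).1 (xs i).2) ∈ SizeImageZ S (xs i).1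

def Formula.redHolds (M : RModel S) (β : (σ : Fin S.numSorts) → V σ → ℤ) :
    Formula S V → Prop
  | .fls => False
  | .lit l => l.redHolds M β
  | .and φ ψ => φ.redHolds M β ∧ ψ.redHolds M β
  | .or φ ψ => φ.redHolds M β ∨ ψ.redHolds M β

def Formula.RedSat (φ : Formula S V) : Prop :=
  ∃ (M : RModel S) (β : (σ : Fin S.numSorts) → V σ → ℤ),
    φ.redHolds M β ∧ ∀ σ (x : V σ), InSort S σ (β σ x)


/-! ### Variables and unfolding -/

/-- The list of (sorted) variables occurring in a literal. -/
def Lit.varList : Lit S V → List (Σ σ, V σ)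
  | .ctorEq _ xs x0 => ⟨_, x0⟩ :: List.ofFn (fun i => ⟨_, xs i⟩)
  | .selEq _ _ x y => [⟨_, x⟩, ⟨_, y⟩]
  | .tst _ x => [⟨_, x⟩]
  | .ntst _ x => [⟨_, x⟩]
  | .eqv x y => [⟨_, x⟩, ⟨_, y⟩]
  | .nev x y => [⟨_, x⟩, ⟨_, y⟩]
  | .sizeC xs _ => List.ofFn xs

/-- The list of (sorted) variables occurring in a formula. -/
def Formula.varList : Formula S V → List (Σ σ, V σ)
  | .fls => []
  | .lit l => l.varList
  | .and φ ψ => φ.varList ++ ψ.varList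
  | .or φ ψ => φ.varList ++ ψ.varList

/-- The disjunction `⋁_{f_j : σ} f_j(x₁ʲ, x₂ʲ, …) ≈ x` over all constructors
of sort `σ`, with argument variables `fresh`. -/
def unfoldDisj (σ : Fin S.numSorts) (x : V σ)
    (fresh : (f : Fin S.numCtors) → (i : Fin (S.ctorArgs f).length) →
       V ((S.ctorArgs f).get i)) : Formula S V :=
  ((List.finRange S.numCtors).map (fun f =>
      if h : S.ctorRes f = σ then
        Formula.lit (Lit.ctorEq f (fresh f) (cast (congrArg V h.symm) x))
      else Formula.fls)).foldr Formula.or Formula.fls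

/-- `φ'` is obtained from `φ` by unfolding the variable `u` (which occurs in
`φ`), using pairwise distinct fresh argument variables. -/
def IsUnfoldStepAt (φ φ' : Formula S V) (u : Σ σ, V σ) : Prop :=
  ∃ fresh : (f : Fin S.numCtors) → (i : Fin (S.ctorArgs f).length) →
      V ((S.ctorArgs f).get i),
    u ∈ φ.varList ∧
    (∀ f i, (⟨_, fresh f i⟩ : Σ σ, V σ) ∉ φ.varList) ∧
    (∀ f i f' i', (⟨_, fresh f i⟩ : Σ σ, V σ) = ⟨_, fresh f' i'⟩ →
       (⟨f, i⟩ : Σ f : Fin S.numCtors, Fin (S.ctorArgs f).length) = ⟨f', i'⟩) ∧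
    φ' = φ.and (unfoldDisj u.1 u.2 fresh)


end ADTSig

/-!
An ADT model of `φ` extends to a model of every `φᵢ`: when `x` is unfolded, its value is some
`f(t₁, …, tₙ)`, and the fresh argument variables of `f` can be sent to the `tⱼ` without
disturbing the variables already present. An ADT model of `φᵢ` in turn yields a model of its
reduct: embed every sort injectively into `ℤ`, onto an initial segment when the sort is finite,
and read constructors, selectors, constructor indices and sizes through this embedding.
-/

theorem Countable.exists_injective_int (α : Type*) [Countable α] :
    ∃ e : α → ℤ, Function.Injective e ∧
      (Finite α → ∀ a, 0 ≤ e a ∧ e a < (Nat.card α : ℤ)) := by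
  by_cases hα : Finite α
  · have := Fintype.ofFinite α
    refine ⟨fun a => (Fintype.equivFin α a : ℤ),
      Nat.cast_injective.comp (Fin.val_injective.comp (Fintype.equivFin α).injective),
      fun _ a => ⟨by positivity, ?_⟩⟩
    rw [Nat.card_eq_fintype_card]
    exact Int.ofNat_lt.mpr (Fintype.equivFin α a).isLt
  · obtain ⟨e, he⟩ := Countable.exists_injective_nat α
    exact ⟨fun a => (e a : ℤ), Nat.cast_injective.comp he, fun h => absurd h hα⟩

theorem Function.exists_extend_sigma {ι κ : Type*} {V T : κ → Type*} (β : ∀ σ, V σ → T σ)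
    {k : ι → Σ σ, V σ} (hk : Function.Injective k) (a : ∀ j, T (k j).1) :
    ∃ β' : ∀ σ, V σ → T σ, (∀ j, β' _ (k j).2 = a j) ∧
      ∀ v ∉ Set.range k, β' v.1 v.2 = β v.1 v.2 := by
  classical
  refine ⟨fun σ x => if h : ∃ j, k j = ⟨σ, x⟩ then
      cast (congrArg (fun v => T v.1) h.choose_spec) (a h.choose) else β σ x, ?_, ?_⟩
  · intro j
    have hj : ∃ j', k j' = ⟨_, (k j).2⟩ := ⟨j, rfl⟩
    suffices ∀ j' (e : k j' = k j), cast (congrArg (fun v => T v.1) e) (a j') = a j from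
      (dif_pos hj).trans (this _ hj.choose_spec)
    intro j' e
    obtain rfl := hk e
    rfl
  · intro v hv
    exact dif_neg hv

namespace ADTSig

variable {S : ADTSig}

def Term.enc : {σ : Fin S.numSorts} → S.Term σ → ℕ
  | _, .mk f args => Encodable.encode (f, List.ofFn fun i => (args i).enc)

theorem Term.eq_of_enc_eq {σ : Fin S.numSorts} (t : S.Term σ) :
    ∀ {σ'} (t' : S.Term σ'), t.enc = t'.enc → σ = σ' ∧ HEq t t' := by
  induction t with
  | mk f args ih =>
    rintro _ ⟨f', args'⟩ h
    obtain ⟨rfl, hargs⟩ := Prod.ext_iff.mp (Encodable.encode_injective h)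
    obtain rfl : args = args' := funext fun i =>
      eq_of_heq (ih i (args' i) (congrFun (List.ofFn_injective hargs) i)).2
    exact ⟨rfl, .rfl⟩

instance (σ : Fin S.numSorts) : Countable (S.Term σ) :=
  ⟨⟨Term.enc, fun t t' h => eq_of_heq (t.eq_of_enc_eq t' h).2⟩⟩

noncomputable def Term.toInt {σ : Fin S.numSorts} : S.Term σ → ℤ :=
  (Countable.exists_injective_int (S.Term σ)).choose

theorem Term.toInt_injective (σ : Fin S.numSorts) :
    Function.Injective (Term.toInt (σ := σ)) :=
  (Countable.exists_injective_int (S.Term σ)).choose_spec.1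

theorem Term.inSort_toInt {σ : Fin S.numSorts} (t : S.Term σ) : InSort S σ t.toInt :=
  fun h => (Countable.exists_injective_int (S.Term σ)).choose_spec.2 h t

theorem Term.head_res {σ : Fin S.numSorts} (t : S.Term σ) : S.ctorRes t.head = σ := by
  cases t; rfl

noncomputable def Term.ofInt (hS : S.WellDefined) (σ : Fin S.numSorts) : ℤ → S.Term σ :=
  have := hS σ
  Function.invFun Term.toInt

@[simp]
theorem Term.ofInt_toInt (hS : S.WellDefined) {σ : Fin S.numSorts} (t : S.Term σ) :
    Term.ofInt hS σ t.toInt = t :=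
  have := hS σ
  Function.leftInverse_invFun (Term.toInt_injective σ) t

noncomputable def canonModel (hS : S.WellDefined) (I : SelInterp S) : RModel S where
  ctorF f xs := (Term.mk f fun i => Term.ofInt hS _ (xs i)).toInt
  selF f j z := (I.sel f j (Term.ofInt hS _ z)).toInt
  ctorIdF σ z := ctorIdx' S (Term.ofInt hS σ z).head
  sizeF σ z := (Term.ofInt hS σ z).size

section canonModel

variable (hS : S.WellDefined) (I : SelInterp S)

@[simp]
theorem canonModel_sizeF_toInt {σ : Fin S.numSorts} (t : S.Term σ) :
    (canonModel hS I).sizeF σ t.toInt = t.size := by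
  simp [canonModel]

theorem ctorSpec'_canonModel (f : Fin S.numCtors)
    (args : (i : Fin (S.ctorArgs f).length) → S.Term ((S.ctorArgs f).get i)) :
    CtorSpec' (canonModel hS I) f (Term.mk f args).toInt fun i => (args i).toInt := by
  refine ⟨by simp [canonModel], by simp [canonModel, Term.head], fun j => ⟨?_, args j, ?_⟩, ?_⟩
  · simp [canonModel, I.sel_mk]
  · simp
  · simp [Term.size]

theorem exCtorSpec'_canonModel_head {σ : Fin S.numSorts} (t : S.Term σ) :
    ExCtorSpec' (canonModel hS I) t.head t.toInt := by
  cases t with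
  | mk f args => exact ⟨_, fun j => (args j).inSort_toInt, ctorSpec'_canonModel hS I f args⟩

theorem Lit.redHolds_canonModel {V : Fin S.numSorts → Type} {l : Lit S V}
    {β : (σ : Fin S.numSorts) → V σ → S.Term σ} (h : l.holds I β) :
    l.redHolds (canonModel hS I) fun σ x => (β σ x).toInt := by
  cases l with
  | ctorEq f xs x0 =>
    simpa only [Lit.redHolds, ← show _ = β _ x0 from h] using ctorSpec'_canonModel hS I f _
  | selEq f j x y =>
    exact ⟨by simpa [canonModel] using congrArg Term.toInt h, (β _ x).head, (β _ x).head_res,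
      exCtorSpec'_canonModel_head hS I _⟩
  | tst f x =>
    simpa only [Lit.redHolds, ← show _ = f from h] using exCtorSpec'_canonModel_head hS I _
  | ntst f x => exact ⟨(β _ x).head, (β _ x).head_res, h, exCtorSpec'_canonModel_head hS I _⟩
  | eqv x y => exact congrArg Term.toInt h
  | nev x y => exact fun hxy => h (Term.toInt_injective _ hxy)
  | sizeC xs P =>
    exact ⟨by simp only [canonModel_sizeF_toInt]; exact h, fun i => ⟨β _ (xs i).2, by simp⟩⟩

theorem Formula.redHolds_canonModel {V : Fin S.numSorts → Type} {φ : Formula S V}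
    {β : (σ : Fin S.numSorts) → V σ → S.Term σ} (h : φ.holds I β) :
    φ.redHolds (canonModel hS I) fun σ x => (β σ x).toInt := by
  induction φ with
  | fls => exact h
  | lit l => exact Lit.redHolds_canonModel hS I h
  | and φ ψ ihφ ihψ => exact ⟨ihφ h.1, ihψ h.2⟩
  | or φ ψ ihφ ihψ => exact h.imp ihφ ihψ

end canonModel

theorem Formula.ADTSat.redSat (hS : S.WellDefined) {V : Fin S.numSorts → Type}
    {φ : Formula S V} : φ.ADTSat → φ.RedSat
  | ⟨I, β, h⟩ => ⟨canonModel hS I, _, Formula.redHolds_canonModel hS I h,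
      fun _ x => (β _ x).inSort_toInt⟩

section unfolding

variable {V : Fin S.numSorts → Type} {I : SelInterp S}

theorem Lit.holds_congr {β β' : (σ : Fin S.numSorts) → V σ → S.Term σ} {l : Lit S V}
    (h : ∀ v ∈ l.varList, β v.1 v.2 = β' v.1 v.2) : l.holds I β ↔ l.holds I β' := by
  cases l <;> simp_all [Lit.varList, Lit.holds]

theorem Formula.holds_congr {β β' : (σ : Fin S.numSorts) → V σ → S.Term σ} {φ : Formula S V}
    (h : ∀ v ∈ φ.varList, β v.1 v.2 = β' v.1 v.2) : φ.holds I β ↔ φ.holds I β' := by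
  induction φ with
  | fls => rfl
  | lit l => exact Lit.holds_congr h
  | and φ ψ ihφ ihψ =>
    simp only [Formula.varList, List.mem_append] at h
    exact and_congr (ihφ fun v hv => h v (.inl hv)) (ihψ fun v hv => h v (.inr hv))
  | or φ ψ ihφ ihψ =>
    simp only [Formula.varList, List.mem_append] at h
    exact or_congr (ihφ fun v hv => h v (.inl hv)) (ihψ fun v hv => h v (.inr hv))

theorem Formula.holds_foldr_or {β : (σ : Fin S.numSorts) → V σ → S.Term σ}
    {l : List (Formula S V)} :
    (l.foldr Formula.or Formula.fls).holds I β ↔ ∃ φ ∈ l, φ.holds I β := by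
  induction l with
  | nil => simp [Formula.holds]
  | cons φ l ih => simp [Formula.holds, ih]

theorem holds_unfoldDisj {β : (σ : Fin S.numSorts) → V σ → S.Term σ} {f : Fin S.numCtors}
    {x : V (S.ctorRes f)}
    {fresh : (f : Fin S.numCtors) → (i : Fin (S.ctorArgs f).length) → V ((S.ctorArgs f).get i)}
    (h : Term.mk f (fun i => β _ (fresh f i)) = β _ x) :
    (unfoldDisj _ x fresh).holds I β :=
  Formula.holds_foldr_or.mpr ⟨.lit (.ctorEq f (fresh f) x),
    List.mem_map.mpr ⟨f, List.mem_finRange f, dif_pos rfl⟩, h⟩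

theorem IsUnfoldStepAt.exists_holds {φ φ' : Formula S V} {u : Σ σ, V σ}
    (hstep : IsUnfoldStepAt φ φ' u) {β : (σ : Fin S.numSorts) → V σ → S.Term σ}
    (hφ : φ.holds I β) : ∃ β', φ'.holds I β' := by
  obtain ⟨fresh, hu, hfresh, hinj, rfl⟩ := hstep
  obtain ⟨σ, x⟩ := u
  generalize hx : β σ x = t
  obtain ⟨f, args⟩ := t
  have hfresh_inj : Function.Injective fun j => (⟨_, fresh f j⟩ : Σ σ, V σ) := fun j j' h =>
    eq_of_heq (Sigma.mk.inj_iff.mp (hinj f j f j' h)).2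
  obtain ⟨β', hβ'fresh, hβ'old⟩ := Function.exists_extend_sigma β hfresh_inj args
  have hagree : ∀ v ∈ φ.varList, β v.1 v.2 = β' v.1 v.2 := fun v hv =>
    (hβ'old v fun ⟨j, hj⟩ => hfresh f j (by subst hj; exact hv)).symm
  refine ⟨β', (Formula.holds_congr hagree).mp hφ, holds_unfoldDisj ?_⟩
  rw [← hagree _ hu, hx]
  exact congrArg _ (funext hβ'fresh)

end unfolding

end ADTSig

open ADTSig in
/-- **Lemma 2 (1).** For any unfolding sequence `φ₀, φ₁, …` of a flat ADT
formula `φ` in NNF with size constraints: if the reduct `φ̃ᵢ` is unsatisfiable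
over EUF+LIA, then `φ` is unsatisfiable over the ADT with size. -/
theorem unfolding_sound (S : ADTSig) (hS : S.WellDefined)
    (V : Fin S.numSorts → Type) (φ : Formula S V)
    (ψ : ℕ → Formula S V) (us : ℕ → Σ σ, V σ)
    (h0 : ψ 0 = φ)
    (hstep : ∀ i, IsUnfoldStepAt (ψ i) (ψ (i + 1)) (us i))
    (i : ℕ) (hunsat : ¬ (ψ i).RedSat) : ¬ φ.ADTSat := by
  rintro ⟨I, β, hφ⟩
  have hsat : ∀ n, ∃ β, (ψ n).holds I β := by
    intro n
    induction n with
    | zero => exact ⟨β, h0 ▸ hφ⟩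
    | succ n ih => exact ih.elim fun _ hψ => (hstep n).exists_holds hψ
  obtain ⟨β, hψ⟩ := hsat i
  exact hunsat (Formula.ADTSat.redSat hS ⟨I, β, hψ⟩)
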